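/- arXiv:2605.18887 — 2 statements merged into one kernel-verified Lean document; each statement's English description precedes it below -/
import Mathlib

section
/- Let $Z_1, Z_2$ be independent standard normal random variables and define $T = Z_1^2 + Z_2^2$ if $Z_1 > 0, Z_2 > 0$; $T = Z_1^2$ if $Z_1 > 0, Z_2 \le 0$; $T = Z_2^2$ if $Z_1 \le 0, Z_2 > 0$; and $T = \min(Z_1^2, Z_2^2)$ if $Z_1 \le 0, Z_2 \le 0$. Then for every $t \ge 0$, $P(T \le t) = \frac{1}{4}F_2(t) + F_1(t) - \frac{1}{4}F_1(t)^2$, where $F_k$ is the CDF of the chi-squared distribution with $k$ degrees of freedom. -/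
/-!
With `ν = N(0,1)`, independence turns `P(T ≤ t)` into the `ν ⊗ ν`-measure of the event
`{chiBarStat ≤ t}`, which we split along the four sign quadrants. Outside the positive quadrant
the pieces are (differences of) product sets, so by the symmetry of `ν` their measures are
polynomials in `p = ν (0, √t]`, and `F₁(t) = 2p` by the substitution `u = x²`. In the positive
quadrant the event is a quarter disc, whose measure `F₂(t) / 4` is computed in polar coordinates.
-/

open MeasureTheory ProbabilityTheory Real

/-- CDF of the chi-squared distribution with `k` degrees of freedom
(as the Gamma(k/2, 1/2) distribution). -/
noncomputable def chiSqCDF (k : ℕ) (t : ℝ) : ℝ :=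
  ((gammaMeasure ((k : ℝ) / 2) (1 / 2)) (Set.Iic t)).toReal

open Set

noncomputable def chiBarStat (x y : ℝ) : ℝ :=
  if 0 < x then (if 0 < y then x ^ 2 + y ^ 2 else x ^ 2)
  else (if 0 < y then y ^ 2 else min (x ^ 2) (y ^ 2))

lemma measurable_chiBarStat : Measurable fun p : ℝ × ℝ ↦ chiBarStat p.1 p.2 :=
  Measurable.ite (measurableSet_lt measurable_const measurable_fst)
    (Measurable.ite (measurableSet_lt measurable_const measurable_snd) (by fun_prop) (by fun_prop))
    (Measurable.ite (measurableSet_lt measurable_const measurable_snd) (by fun_prop) (by fun_prop))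

def quarterDisc (t : ℝ) : Set (ℝ × ℝ) := {p | 0 < p.1 ∧ 0 < p.2 ∧ p.1 ^ 2 + p.2 ^ 2 ≤ t}

lemma measurableSet_quarterDisc (t : ℝ) : MeasurableSet (quarterDisc t) :=
  (measurableSet_lt measurable_const measurable_fst).inter
    ((measurableSet_lt measurable_const measurable_snd).inter
      (measurableSet_le (by fun_prop : Measurable fun p : ℝ × ℝ ↦ p.1 ^ 2 + p.2 ^ 2)
        measurable_const))

section Symmetric

variable {ν : Measure ℝ}

lemma measureReal_preimage_neg_of_map_neg (hν : ν.map (fun x ↦ -x) = ν) {s : Set ℝ}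
    (hs : MeasurableSet s) : ν.real ((fun x ↦ -x) ⁻¹' s) = ν.real s := by
  rw [← map_measureReal_apply measurable_neg hs, hν]

variable [IsProbabilityMeasure ν]

lemma measureReal_Iic_zero_of_map_neg (hν : ν.map (fun x ↦ -x) = ν) (h0 : ν {0} = 0) :
    ν.real (Iic 0) = 1 / 2 := by
  have hIoi : ν.real (Iic 0) = ν.real (Ioi 0) := by
    rw [measureReal_congr (Ioi_ae_eq_Ici' h0),
      ← measureReal_preimage_neg_of_map_neg hν measurableSet_Ici]
    simp
  have hsum := measureReal_add_measureReal_compl (μ := ν) (measurableSet_Iic (a := (0 : ℝ)))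
  rw [compl_Iic, probReal_univ] at hsum
  linarith

lemma measureReal_Iio_neg_of_map_neg (hν : ν.map (fun x ↦ -x) = ν) (h0 : ν {0} = 0)
    {s : ℝ} (hs : 0 ≤ s) : ν.real (Iio (-s)) = 1 / 2 - ν.real (Ioc 0 s) := by
  have hIoi : ν.real (Iio (-s)) = ν.real (Ioi s) := by
    rw [← measureReal_preimage_neg_of_map_neg hν measurableSet_Iio]
    simp
  have hsplit : ν.real (Ioc 0 s) + ν.real (Ioi s) = ν.real (Ioi 0) := by
    rw [← measureReal_union (Ioc_disjoint_Ioi le_rfl) measurableSet_Ioi, Ioc_union_Ioi_eq_Ioi hs]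
  have hhalf : ν.real (Ioi 0) = 1 / 2 := by
    rw [← compl_Iic, probReal_compl_eq_one_sub measurableSet_Iic,
      measureReal_Iic_zero_of_map_neg hν h0]
    norm_num
  linarith

lemma measureReal_prod_chiBarStat_le (hν : ν.map (fun x ↦ -x) = ν) (h0 : ν {0} = 0)
    {t : ℝ} (ht : 0 ≤ t) :
    (ν.prod ν).real {p | chiBarStat p.1 p.2 ≤ t}
      = (ν.prod ν).real (quarterDisc t) + 2 * ν.real (Ioc 0 √t) - ν.real (Ioc 0 √t) ^ 2 := by
  set A := {p : ℝ × ℝ | chiBarStat p.1 p.2 ≤ t}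
  set H₁ := {p : ℝ × ℝ | 0 < p.1}
  set H₂ := {p : ℝ × ℝ | 0 < p.2}
  have hquadrants : (ν.prod ν).real A = (ν.prod ν).real (A ∩ H₁ ∩ H₂)
      + (ν.prod ν).real ((A ∩ H₁) \ H₂) + (ν.prod ν).real ((A \ H₁) ∩ H₂)
      + (ν.prod ν).real ((A \ H₁) \ H₂) := by
    have hH₁ : MeasurableSet H₁ := measurableSet_lt measurable_const measurable_fst
    have hH₂ : MeasurableSet H₂ := measurableSet_lt measurable_const measurable_snd
    rw [measureReal_inter_add_sdiff hH₂, add_assoc, measureReal_inter_add_sdiff hH₂,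
      measureReal_inter_add_sdiff hH₁]
  obtain ⟨hpp, hpn, hnp, hnn⟩ : A ∩ H₁ ∩ H₂ = quarterDisc t
      ∧ (A ∩ H₁) \ H₂ = Ioc 0 √t ×ˢ Iic 0
      ∧ (A \ H₁) ∩ H₂ = Iic 0 ×ˢ Ioc 0 √t
      ∧ (A \ H₁) \ H₂ = Iic 0 ×ˢ Iic 0 \ Iio (-√t) ×ˢ Iio (-√t) := by
    refine ⟨?_, ?_, ?_, ?_⟩ <;> ext ⟨x, y⟩ <;> by_cases hx : 0 < x <;> by_cases hy : 0 < y <;>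
      simp [A, H₁, H₂, chiBarStat, quarterDisc, hx, hy, Real.sq_le ht]
    all_goals grind [sqrt_nonneg t]
  have hsub : Iio (-√t) ×ˢ Iio (-√t) ⊆ Iic (0 : ℝ) ×ˢ Iic 0 := by
    have : Iio (-√t) ⊆ Iic 0 := Iio_subset_Iic_iff.mpr (by linarith [sqrt_nonneg t])
    exact prod_mono this this
  rw [hquadrants, hpp, hpn, hnp, hnn,
    measureReal_sdiff hsub (measurableSet_Iio.prod measurableSet_Iio), measureReal_prod_prod,
    measureReal_prod_prod, measureReal_prod_prod, measureReal_prod_prod,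
    measureReal_Iic_zero_of_map_neg hν h0, measureReal_Iio_neg_of_map_neg hν h0 (sqrt_nonneg t)]
  ring

end Symmetric

lemma measureReal_gaussianReal (μ : ℝ) {v : NNReal} (hv : v ≠ 0) (s : Set ℝ) :
    (gaussianReal μ v).real s = ∫ x in s, gaussianPDFReal μ v x := by
  rw [measureReal_def, gaussianReal_apply_eq_integral μ hv,
    ENNReal.toReal_ofReal (integral_nonneg (gaussianPDFReal_nonneg μ v))]

lemma chiSqCDF_eq_cdf {k : ℕ} (hk : 0 < k) (t : ℝ) :
    chiSqCDF k t = cdf (gammaMeasure ((k : ℝ) / 2) (1 / 2)) t := by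
  have := isProbabilityMeasure_gammaMeasure (a := (k : ℝ) / 2) (r := 1 / 2) (by positivity)
    (by norm_num)
  rw [cdf_eq_real, chiSqCDF, measureReal_def]

lemma chiSqCDF_two {t : ℝ} (ht : 0 ≤ t) : chiSqCDF 2 t = 1 - exp (-(t / 2)) := by
  rw [chiSqCDF_eq_cdf two_pos, show ((2 : ℕ) : ℝ) / 2 = 1 by norm_num, ← expMeasure,
    cdf_expMeasure_eq (by norm_num), if_pos ht, one_div_mul_eq_div]

lemma gammaPDFReal_of_nonpos {a r x : ℝ} (ha : a ≠ 1) (hx : x ≤ 0) : gammaPDFReal a r x = 0 := by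
  rcases hx.lt_or_eq with hx | rfl
  · simp [gammaPDFReal, hx.not_ge]
  · simp [gammaPDFReal, zero_rpow (sub_ne_zero.mpr ha)]

lemma mul_gammaPDFReal_half_sq {x : ℝ} (hx : 0 < x) :
    x * gammaPDFReal (1 / 2) (1 / 2) (x ^ 2) = gaussianPDFReal 0 1 x := by
  have hpow : (x ^ 2) ^ ((1 / 2 : ℝ) - 1) = x⁻¹ := by
    rw [← rpow_natCast, ← rpow_mul hx.le]
    norm_num [rpow_neg_one]
  have hhalf : (1 / 2 : ℝ) ^ (1 / 2 : ℝ) = (√2)⁻¹ := by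
    rw [← sqrt_eq_rpow, one_div, sqrt_inv]
  rw [gammaPDFReal, if_pos (by positivity), gaussianPDFReal, hpow, hhalf, Gamma_one_half_eq]
  push_cast
  rw [mul_one, sqrt_mul (by norm_num), sub_zero]
  field_simp

lemma image_sq_Ioc {a : ℝ} (ha : 0 ≤ a) : (fun x : ℝ ↦ x ^ 2) '' Ioc 0 a = Ioc 0 (a ^ 2) := by
  ext u
  constructor
  · rintro ⟨x, ⟨hx0, hxa⟩, rfl⟩
    exact ⟨by positivity, pow_le_pow_left₀ hx0.le hxa 2⟩
  · rintro ⟨hu0, hua⟩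
    refine ⟨√u, ⟨sqrt_pos.mpr hu0, ?_⟩, sq_sqrt hu0.le⟩
    simpa [sqrt_sq ha] using sqrt_le_sqrt hua

lemma chiSqCDF_one {t : ℝ} (ht : 0 ≤ t) :
    chiSqCDF 1 t = 2 * (gaussianReal 0 1).real (Ioc 0 √t) := by
  have hIoc : chiSqCDF 1 t = ∫ u in Ioc 0 t, gammaPDFReal (1 / 2) (1 / 2) u := by
    rw [chiSqCDF_eq_cdf one_pos, show ((1 : ℕ) : ℝ) / 2 = 1 / 2 by norm_num,
      cdf_gammaMeasure_eq_integral (by norm_num) (by norm_num)]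
    refine setIntegral_eq_of_subset_of_forall_sdiff_eq_zero measurableSet_Iic Ioc_subset_Iic_self
      fun x hx ↦ gammaPDFReal_of_nonpos (by norm_num) (not_lt.mp fun h ↦ hx.2 ⟨h, hx.1⟩)
  calc chiSqCDF 1 t = ∫ u in Ioc 0 t, gammaPDFReal (1 / 2) (1 / 2) u := hIoc
    _ = ∫ x in Ioc 0 √t, |2 * x| * gammaPDFReal (1 / 2) (1 / 2) (x ^ 2) := by
      conv_lhs => rw [← sq_sqrt ht, ← image_sq_Ioc (sqrt_nonneg t)]
      refine integral_image_eq_integral_abs_deriv_smul measurableSet_Ioc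
        (fun x _ ↦ ?_) ((pow_left_strictMonoOn₀ two_ne_zero).injOn.mono ?_) _
      · simpa [mul_comm] using (hasDerivAt_pow 2 x).hasDerivWithinAt
      · exact fun x hx ↦ hx.1.le
    _ = ∫ x in Ioc 0 √t, 2 * gaussianPDFReal 0 1 x := by
      refine setIntegral_congr_fun measurableSet_Ioc fun x hx ↦ ?_
      rw [abs_of_pos (by linarith [hx.1]), mul_assoc, mul_gammaPDFReal_half_sq hx.1]
    _ = 2 * (gaussianReal 0 1).real (Ioc 0 √t) := by
      rw [integral_const_mul, measureReal_gaussianReal 0 one_ne_zero]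

lemma cos_pos_and_sin_pos_iff {θ : ℝ} (h₁ : -π ≤ θ) (h₂ : θ ≤ π) :
    0 < cos θ ∧ 0 < sin θ ↔ θ ∈ Ioo 0 (π / 2) := by
  constructor
  · rintro ⟨hcos, hsin⟩
    refine ⟨not_le.mp fun h ↦ (sin_nonpos_of_nonpos_of_neg_pi_le h h₁).not_gt hsin,
      not_le.mp fun h ↦ (cos_nonpos_of_pi_div_two_le_of_le h (by linarith [pi_pos])).not_gt hcos⟩
  · rintro ⟨h0, hπ⟩
    exact ⟨cos_pos_of_mem_Ioo ⟨by linarith, hπ⟩, sin_pos_of_pos_of_lt_pi h0 (by linarith)⟩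

lemma polarCoord_symm_sq_add_sq (p : ℝ × ℝ) :
    (polarCoord.symm p).1 ^ 2 + (polarCoord.symm p).2 ^ 2 = p.1 ^ 2 := by
  simp only [polarCoord_symm_apply]
  linear_combination p.1 ^ 2 * cos_sq_add_sin_sq p.2

lemma polarCoord_symm_mem_quarterDisc_iff {t : ℝ} (ht : 0 ≤ t) {p : ℝ × ℝ}
    (hp : p ∈ polarCoord.target) :
    polarCoord.symm p ∈ quarterDisc t ↔ p ∈ Ioc 0 √t ×ˢ Ioo 0 (π / 2) := by
  obtain ⟨r, θ⟩ := p
  obtain ⟨hr, hθ₁, hθ₂⟩ : 0 < r ∧ -π < θ ∧ θ < π := by simpa using hp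
  simp only [quarterDisc, mem_ofPred_eq, polarCoord_symm_sq_add_sq]
  simp only [polarCoord_symm_apply, mul_pos_iff_of_pos_left hr, mem_prod, mem_Ioc, hr, true_and,
    ← le_sqrt hr.le ht, ← cos_pos_and_sin_pos_iff hθ₁.le hθ₂.le]
  tauto

lemma integral_quarterDisc_radial {t : ℝ} (ht : 0 ≤ t) (g : ℝ → ℝ) :
    ∫ p in quarterDisc t, g (p.1 ^ 2 + p.2 ^ 2) = π / 2 * ∫ r in Ioc 0 √t, r * g (r ^ 2) := by
  have hpolar : ∀ p ∈ polarCoord.target,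
      p.1 • (quarterDisc t).indicator (fun q ↦ g (q.1 ^ 2 + q.2 ^ 2)) (polarCoord.symm p)
        = (Ioc 0 √t ×ˢ Ioo 0 (π / 2)).indicator (fun p ↦ p.1 * g (p.1 ^ 2) * 1) p := by
    intro p hp
    by_cases hmem : p ∈ Ioc 0 √t ×ˢ Ioo 0 (π / 2)
    · rw [indicator_of_mem ((polarCoord_symm_mem_quarterDisc_iff ht hp).mpr hmem),
        indicator_of_mem hmem, polarCoord_symm_sq_add_sq, smul_eq_mul, mul_one]
    · rw [indicator_of_notMem (mt (polarCoord_symm_mem_quarterDisc_iff ht hp).mp hmem),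
        indicator_of_notMem hmem, smul_zero]
  have hsub : Ioc 0 √t ×ˢ Ioo 0 (π / 2) ⊆ polarCoord.target :=
    prod_mono (fun r hr ↦ hr.1) (Ioo_subset_Ioo (by linarith [pi_pos]) (by linarith [pi_pos]))
  rw [← integral_indicator (measurableSet_quarterDisc t), ← integral_comp_polarCoord_symm,
    setIntegral_congr_fun polarCoord.open_target.measurableSet hpolar,
    setIntegral_indicator (measurableSet_Ioc.prod measurableSet_Ioo), inter_eq_right.mpr hsub,
    Measure.volume_eq_prod, setIntegral_prod_mul (fun r ↦ r * g (r ^ 2)) (fun _ ↦ (1 : ℝ)),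
    setIntegral_const, volume_real_Ioo_of_le (by positivity), smul_eq_mul, mul_one, mul_comm,
    sub_zero]

lemma integral_Ioc_mul_exp_neg_sq_div_two {a : ℝ} (ha : 0 ≤ a) :
    ∫ r in Ioc 0 a, r * exp (-(r ^ 2 / 2)) = 1 - exp (-(a ^ 2 / 2)) := by
  have hderiv (r : ℝ) : HasDerivAt (fun r ↦ -exp (-(r ^ 2 / 2))) (r * exp (-(r ^ 2 / 2))) r := by
    refine ((hasDerivAt_pow 2 r).div_const 2).fun_neg.exp.fun_neg.congr_deriv ?_
    push_cast
    ring
  rw [← intervalIntegral.integral_of_le ha, intervalIntegral.integral_eq_sub_of_hasDerivAt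
    (fun r _ ↦ hderiv r) (Continuous.intervalIntegrable (by fun_prop) _ _)]
  norm_num
  ring

lemma gaussianPDFReal_mul_gaussianPDFReal (x y : ℝ) :
    gaussianPDFReal 0 1 x * gaussianPDFReal 0 1 y
      = (2 * π)⁻¹ * exp (-((x ^ 2 + y ^ 2) / 2)) := by
  simp only [gaussianPDFReal, NNReal.coe_one, mul_one, sub_zero]
  rw [mul_mul_mul_comm, ← exp_add, ← mul_inv, mul_self_sqrt (by positivity)]
  congr 2
  ring

lemma gaussianReal_prod_gaussianReal :
    (gaussianReal 0 1).prod (gaussianReal 0 1) = volume.withDensity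
      fun p ↦ ENNReal.ofReal ((2 * π)⁻¹ * exp (-((p.1 ^ 2 + p.2 ^ 2) / 2))) := by
  rw [gaussianReal_of_var_ne_zero 0 one_ne_zero, prod_withDensity (measurable_gaussianPDF 0 1)
    (measurable_gaussianPDF 0 1), ← Measure.volume_eq_prod]
  congr with p
  rw [gaussianPDF, gaussianPDF, ← ENNReal.ofReal_mul (gaussianPDFReal_nonneg 0 1 _),
    gaussianPDFReal_mul_gaussianPDFReal]

lemma measureReal_gaussianReal_prod_quarterDisc {t : ℝ} (ht : 0 ≤ t) :
    ((gaussianReal 0 1).prod (gaussianReal 0 1)).real (quarterDisc t)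
      = (1 - exp (-(t / 2))) / 4 := by
  have hradial := integral_quarterDisc_radial ht fun u ↦ (2 * π)⁻¹ * exp (-(u / 2))
  simp only [mul_left_comm _ (2 * π)⁻¹, integral_const_mul,
    integral_Ioc_mul_exp_neg_sq_div_two (sqrt_nonneg t), sq_sqrt ht] at hradial
  rw [measureReal_def, gaussianReal_prod_gaussianReal,
    withDensity_apply _ (measurableSet_quarterDisc t),
    ← integral_eq_lintegral_of_nonneg_ae (ae_of_all _ fun _ ↦ by positivity) (by fun_prop),
    integral_const_mul, hradial]
  field_simp
  ring

/-- The chi-bar-squared distribution for two arms: if `T` equals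
`Z₁² + Z₂²`, `Z₁²`, `Z₂²`, or `min(Z₁², Z₂²)` according to the signs of `Z₁, Z₂`,
then `P(T ≤ t) = (1/4) F₂(t) + F₁(t) - (1/4) F₁(t)²`. -/
theorem chi_bar_squared_cdf_two {Ω : Type*} [MeasurableSpace Ω]
    (μ : Measure Ω) [IsProbabilityMeasure μ]
    (Z1 Z2 : Ω → ℝ) (hm1 : Measurable Z1) (hm2 : Measurable Z2)
    (h1 : μ.map Z1 = gaussianReal 0 1) (h2 : μ.map Z2 = gaussianReal 0 1)
    (hindep : IndepFun Z1 Z2 μ)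
    (T : Ω → ℝ)
    (hT : ∀ ω, T ω =
      if 0 < Z1 ω then (if 0 < Z2 ω then Z1 ω ^ 2 + Z2 ω ^ 2 else Z1 ω ^ 2)
      else (if 0 < Z2 ω then Z2 ω ^ 2 else min (Z1 ω ^ 2) (Z2 ω ^ 2))) :
    ∀ t : ℝ, 0 ≤ t →
      (μ {ω | T ω ≤ t}).toReal
        = (1 / 4) * chiSqCDF 2 t + chiSqCDF 1 t - (1 / 4) * chiSqCDF 1 t ^ 2 := by
  intro t ht
  have hlaw : μ.map (fun ω ↦ (Z1 ω, Z2 ω)) = (gaussianReal 0 1).prod (gaussianReal 0 1) := by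
    rw [(indepFun_iff_map_prod_eq_prod_map_map hm1.aemeasurable hm2.aemeasurable).mp hindep,
      h1, h2]
  have hevent : {ω | T ω ≤ t} = (fun ω ↦ (Z1 ω, Z2 ω)) ⁻¹' {p | chiBarStat p.1 p.2 ≤ t} := by
    ext ω
    simp only [mem_ofPred_eq, mem_preimage, hT, chiBarStat]
  have hsymm : (gaussianReal 0 1).map (fun x ↦ -x) = gaussianReal 0 1 := by
    rw [gaussianReal_map_neg, neg_zero]
  have hatom : gaussianReal 0 1 {0} = 0 :=
    (nullSingletonClass_gaussianReal one_ne_zero).measure_singleton 0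
  rw [← measureReal_def, hevent, ← map_measureReal_apply (hm1.prodMk hm2)
      (measurableSet_le measurable_chiBarStat measurable_const), hlaw,
    measureReal_prod_chiBarStat_le hsymm hatom ht, measureReal_gaussianReal_prod_quarterDisc ht,
    chiSqCDF_two ht, chiSqCDF_one ht]
  ring
end

section
/- In the two-fold cross-fitting setup at the kink, let $\hat\mu^{(\ell)}_j$ for $j,\ell \in \{1,2\}$ be four independent $N(0, 1/m)$ random variables, $I^{(\ell)} = \mathbf{1}\{\hat\mu^{(\ell)}_1 > \hat\mu^{(\ell)}_2\}$, $\hat\theta^{(1)} = I^{(1)}\hat\mu^{(2)}_1 + (1-I^{(1)})\hat\mu^{(2)}_2$, and $\hat\theta^{(2)} = I^{(2)}\hat\mu^{(1)}_1 + (1-I^{(2)})\hat\mu^{(1)}_2$. Then $\mathrm{Cov}(\hat\theta^{(1)}, \hat\theta^{(2)}) = \frac{1}{\pi m}$ and $\mathrm{Corr}(\hat\theta^{(1)}, \hat\theta^{(2)}) = \frac{1}{\pi}$. -/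
/-!
Write `I(a) = 1{a₂ < a₁}` for the selection event of a fold `a = (μ̂₁, μ̂₂)`, so that
`θ̂⁽¹⁾ = I(A) B₁ + (1 - I(A)) B₂` and `θ̂⁽²⁾ = I(B) A₁ + (1 - I(B)) A₂` for the independent
folds `A`, `B`. Each estimator reads a coordinate of one fold chosen by the other, independent
fold, so it is again `N(0, v)`. Expanding the product and using independence, `E[θ̂⁽¹⁾ θ̂⁽²⁾]`
is a quadratic form in the four truncated moments `E[I(A) A₁]`, `E[I(A) A₂]`,
`E[(1 - I(A)) A₁]`, `E[(1 - I(A)) A₂]`, which are `K, -K, -K, K`. Integrating out the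
losing arm first, `K = E[∫_{x > A₂} x φ(x) dx] = v E[φ(A₂)] = v ∫ φ² = √(v / π) / 2`,
because `-v φ` is an antiderivative of `x φ(x)`; hence `E[θ̂⁽¹⁾ θ̂⁽²⁾] = 4K² = v / π`.
-/

open MeasureTheory ProbabilityTheory Real
open Set Filter
open scoped NNReal Topology

section GaussianDensity

variable {v : ℝ≥0}

lemma hasDerivAt_gaussianPDFReal_zero (x : ℝ) :
    HasDerivAt (gaussianPDFReal 0 v) (-(x / v) * gaussianPDFReal 0 v x) x := by
  have hφ : gaussianPDFReal 0 v = fun y ↦ (√(2 * π * v))⁻¹ * rexp (-y ^ 2 / (2 * v)) := by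
    simp [gaussianPDFReal_def]
  rw [hφ]
  refine ((((hasDerivAt_pow 2 x).fun_neg.div_const _).exp).const_mul _).congr_deriv ?_
  field_simp
  ring

lemma setIntegral_gaussianReal_eq_setIntegral_mul {m₀ : ℝ} (hv : v ≠ 0) {s : Set ℝ}
    (hs : MeasurableSet s) (f : ℝ → ℝ) :
    ∫ x in s, f x ∂gaussianReal m₀ v = ∫ x in s, f x * gaussianPDFReal m₀ v x := by
  rw [← integral_indicator hs, ← integral_indicator hs, integral_gaussianReal_eq_integral_smul hv]
  congr 1 with x
  by_cases hx : x ∈ s <;> simp [hx, mul_comm]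

variable (hv : v ≠ 0)
include hv

lemma hasDerivAt_neg_mul_gaussianPDFReal_zero (x : ℝ) :
    HasDerivAt (fun y ↦ -(v : ℝ) * gaussianPDFReal 0 v y) (x * gaussianPDFReal 0 v x) x := by
  have hv' : (v : ℝ) ≠ 0 := by exact_mod_cast hv
  refine ((hasDerivAt_gaussianPDFReal_zero x).const_mul (-(v : ℝ))).congr_deriv ?_
  field_simp

lemma integrable_mul_gaussianPDFReal_zero : Integrable fun x ↦ x * gaussianPDFReal 0 v x := by
  have h : Integrable id (gaussianReal 0 v) := (memLp_id_gaussianReal 1).integrable le_rfl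
  rw [gaussianReal_of_var_ne_zero 0 hv, integrable_withDensity_iff_integrable_smul'
    (measurable_gaussianPDF 0 v) (ae_of_all _ fun _ ↦ gaussianPDF_lt_top)] at h
  simpa [toReal_gaussianPDF, mul_comm] using h

lemma integral_Ioi_mul_gaussianPDFReal_zero (t : ℝ) :
    ∫ x in Ioi t, x * gaussianPDFReal 0 v x = v * gaussianPDFReal 0 v t := by
  have hderiv := hasDerivAt_neg_mul_gaussianPDFReal_zero hv
  have hlim : Tendsto (fun y ↦ -(v : ℝ) * gaussianPDFReal 0 v y) atTop (𝓝 0) :=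
    tendsto_zero_of_hasDerivAt_of_integrableOn_Ioi (a := 0) (fun x _ ↦ hderiv x)
      (integrable_mul_gaussianPDFReal_zero hv).integrableOn
      ((integrable_gaussianPDFReal 0 v).const_mul _).integrableOn
  rw [integral_Ioi_of_hasDerivAt_of_tendsto' (fun x _ ↦ hderiv x)
    (integrable_mul_gaussianPDFReal_zero hv).integrableOn hlim]
  ring

lemma integral_Iio_mul_gaussianPDFReal_zero (t : ℝ) :
    ∫ x in Iio t, x * gaussianPDFReal 0 v x = -(v * gaussianPDFReal 0 v t) := by
  have hderiv := hasDerivAt_neg_mul_gaussianPDFReal_zero hv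
  have hlim : Tendsto (fun y ↦ -(v : ℝ) * gaussianPDFReal 0 v y) atBot (𝓝 0) :=
    tendsto_zero_of_hasDerivAt_of_integrableOn_Iic (a := 0) (fun x _ ↦ hderiv x)
      (integrable_mul_gaussianPDFReal_zero hv).integrableOn
      ((integrable_gaussianPDFReal 0 v).const_mul _).integrableOn
  rw [← integral_Iic_eq_integral_Iio, integral_Iic_of_hasDerivAt_of_tendsto'
    (fun x _ ↦ hderiv x) (integrable_mul_gaussianPDFReal_zero hv).integrableOn hlim]
  ring

lemma integral_gaussianPDFReal_zero_sq :
    ∫ x, gaussianPDFReal 0 v x ^ 2 = (2 * √(π * v))⁻¹ := by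
  have hπv : 0 < π * v := by positivity
  have hsq (x : ℝ) :
      gaussianPDFReal 0 v x ^ 2 = (2 * π * v)⁻¹ * rexp (-(v : ℝ)⁻¹ * x ^ 2) := by
    rw [gaussianPDFReal_def, mul_pow, inv_pow, sq_sqrt (by positivity), ← exp_nat_mul]
    congr 2
    field_simp
    ring
  simp_rw [hsq]
  rw [integral_const_mul, integral_gaussian, div_inv_eq_mul,
    show (2 * π * v : ℝ) = 2 * √(π * v) ^ 2 by rw [sq_sqrt hπv.le]; ring]
  field_simp

end GaussianDensity

def firstArmWins : Set (ℝ × ℝ) := {p | p.2 < p.1}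

lemma measurableSet_firstArmWins : MeasurableSet firstArmWins :=
  measurableSet_lt measurable_snd measurable_fst

/-- The paper's `θ̂` with selection fold `a` and evaluation fold `b`. -/
noncomputable def crossfitEstimate (a b : ℝ × ℝ) : ℝ := if a.2 < a.1 then b.1 else b.2

lemma measurable_crossfitEstimate :
    Measurable fun z : (ℝ × ℝ) × (ℝ × ℝ) ↦ crossfitEstimate z.1 z.2 :=
  Measurable.ite (measurableSet_firstArmWins.preimage measurable_fst)
    measurable_snd.fst measurable_snd.snd

lemma crossfitEstimate_mul_crossfitEstimate (a b : ℝ × ℝ) :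
    crossfitEstimate a b * crossfitEstimate b a =
      firstArmWins.indicator Prod.fst a * firstArmWins.indicator Prod.fst b +
      firstArmWins.indicator Prod.snd a * firstArmWinsᶜ.indicator Prod.fst b +
      firstArmWinsᶜ.indicator Prod.fst a * firstArmWins.indicator Prod.snd b +
      firstArmWinsᶜ.indicator Prod.snd a * firstArmWinsᶜ.indicator Prod.snd b := by
  by_cases ha : a.2 < a.1 <;> by_cases hb : b.2 < b.1 <;>
    simp [crossfitEstimate, firstArmWins, ha, hb, mul_comm]

section Folds

variable {Ω : Type*} [MeasurableSpace Ω] {μ : Measure Ω} [IsProbabilityMeasure μ]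
  {A B : Ω → ℝ × ℝ}

lemma hasLaw_crossfitEstimate {κ : Measure ℝ} (hA : Measurable A) (hB : Measurable B)
    (hB₁ : HasLaw (fun ω ↦ (B ω).1) κ μ) (hB₂ : HasLaw (fun ω ↦ (B ω).2) κ μ)
    (hAB : IndepFun A B μ) :
    HasLaw (fun ω ↦ crossfitEstimate (A ω) (B ω)) κ μ := by
  have hmeas : Measurable fun ω ↦ crossfitEstimate (A ω) (B ω) :=
    measurable_crossfitEstimate.comp (hA.prodMk hB)
  refine ⟨hmeas.aemeasurable, Measure.ext fun S hS ↦ ?_⟩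
  have hW := measurableSet_firstArmWins
  have hsplit : (fun ω ↦ crossfitEstimate (A ω) (B ω)) ⁻¹' S =
      (A ⁻¹' firstArmWins ∩ B ⁻¹' (Prod.fst ⁻¹' S)) ∪
        (A ⁻¹' firstArmWinsᶜ ∩ B ⁻¹' (Prod.snd ⁻¹' S)) := by
    ext ω
    by_cases h : (A ω).2 < (A ω).1 <;> simp [crossfitEstimate, firstArmWins, h]
  have hdisj : Disjoint (A ⁻¹' firstArmWins ∩ B ⁻¹' (Prod.fst ⁻¹' S))
      (A ⁻¹' firstArmWinsᶜ ∩ B ⁻¹' (Prod.snd ⁻¹' S)) :=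
    (disjoint_compl_right.preimage A).mono inter_subset_left inter_subset_left
  have h₁ : μ (B ⁻¹' (Prod.fst ⁻¹' S)) = κ S := by
    rw [← hB₁.map_eq, Measure.map_apply hB.fst hS]; rfl
  have h₂ : μ (B ⁻¹' (Prod.snd ⁻¹' S)) = κ S := by
    rw [← hB₂.map_eq, Measure.map_apply hB.snd hS]; rfl
  rw [Measure.map_apply hmeas hS, hsplit,
    measure_union hdisj ((hA hW.compl).inter (hB (measurable_snd hS))),
    hAB.measure_inter_preimage_eq_mul _ _ hW (measurable_fst hS),
    hAB.measure_inter_preimage_eq_mul _ _ hW.compl (measurable_snd hS), h₁, h₂, ← add_mul,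
    preimage_compl, measure_add_measure_compl (hA hW), measure_univ, one_mul]

lemma integral_crossfitEstimate_mul_crossfitEstimate {ν : Measure (ℝ × ℝ)}
    (hfst : Integrable Prod.fst ν) (hsnd : Integrable Prod.snd ν)
    (hA : HasLaw A ν μ) (hB : HasLaw B ν μ) (hAB : IndepFun A B μ) :
    ∫ ω, crossfitEstimate (A ω) (B ω) * crossfitEstimate (B ω) (A ω) ∂μ =
      (∫ p in firstArmWins, p.1 ∂ν) ^ 2 +
      2 * (∫ p in firstArmWins, p.2 ∂ν) * (∫ p in firstArmWinsᶜ, p.1 ∂ν) +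
      (∫ p in firstArmWinsᶜ, p.2 ∂ν) ^ 2 := by
  have := hA.isProbabilityMeasure_iff.1 inferInstance
  have hW := measurableSet_firstArmWins
  have hlaw := ((indepFun_iff_hasLaw_prodMk_prod hA hB).1 hAB).integral_comp
    (f := fun z ↦ crossfitEstimate z.1 z.2 * crossfitEstimate z.2 z.1)
    (measurable_crossfitEstimate.mul
      (measurable_crossfitEstimate.comp measurable_swap)).aestronglyMeasurable
  simp only [Function.comp_def, crossfitEstimate_mul_crossfitEstimate] at hlaw
  have h₁ := (hfst.indicator hW).mul_prod (hfst.indicator hW)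
  have h₂ := (hsnd.indicator hW).mul_prod (hfst.indicator hW.compl)
  have h₃ := (hfst.indicator hW.compl).mul_prod (hsnd.indicator hW)
  have h₄ := (hsnd.indicator hW.compl).mul_prod (hsnd.indicator hW.compl)
  simp only [crossfitEstimate_mul_crossfitEstimate]
  rw [hlaw, integral_add ?_ h₄, integral_add ?_ h₃, integral_add h₁ h₂,
    integral_prod_mul, integral_prod_mul, integral_prod_mul, integral_prod_mul,
    integral_indicator hW, integral_indicator hW, integral_indicator hW.compl,
    integral_indicator hW.compl]
  · ring
  · exact h₁.add h₂
  · exact (h₁.add h₂).add h₃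

end Folds

section GaussianFolds

variable {v : ℝ≥0}

lemma integrable_fst_gaussianReal_prod :
    Integrable Prod.fst ((gaussianReal 0 v).prod (gaussianReal 0 v)) :=
  ((memLp_id_gaussianReal 1).integrable le_rfl).comp_fst _

lemma integrable_snd_gaussianReal_prod :
    Integrable Prod.snd ((gaussianReal 0 v).prod (gaussianReal 0 v)) :=
  ((memLp_id_gaussianReal 1).integrable le_rfl).comp_snd _

variable (hv : v ≠ 0)
include hv

lemma setIntegral_firstArmWins_fst_gaussianReal_prod :
    ∫ p in firstArmWins, p.1 ∂(gaussianReal 0 v).prod (gaussianReal 0 v) =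
      v * ∫ x, gaussianPDFReal 0 v x ^ 2 := by
  rw [← integral_indicator measurableSet_firstArmWins, integral_prod_symm _
    (integrable_fst_gaussianReal_prod.indicator measurableSet_firstArmWins)]
  have hinner (y : ℝ) : ∫ x, firstArmWins.indicator Prod.fst (x, y) ∂gaussianReal 0 v =
      v * gaussianPDFReal 0 v y := by
    rw [← integral_Ioi_mul_gaussianPDFReal_zero hv, ← setIntegral_gaussianReal_eq_setIntegral_mul hv
      measurableSet_Ioi, ← integral_indicator measurableSet_Ioi]
    rfl
  simp_rw [hinner, integral_gaussianReal_eq_integral_smul hv, smul_eq_mul, ← integral_const_mul]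
  congr 1 with x
  ring

lemma setIntegral_firstArmWins_snd_gaussianReal_prod :
    ∫ p in firstArmWins, p.2 ∂(gaussianReal 0 v).prod (gaussianReal 0 v) =
      -(v * ∫ x, gaussianPDFReal 0 v x ^ 2) := by
  rw [← integral_indicator measurableSet_firstArmWins, integral_prod _
    (integrable_snd_gaussianReal_prod.indicator measurableSet_firstArmWins)]
  have hinner (x : ℝ) : ∫ y, firstArmWins.indicator Prod.snd (x, y) ∂gaussianReal 0 v =
      -(v * gaussianPDFReal 0 v x) := by
    rw [← integral_Iio_mul_gaussianPDFReal_zero hv, ← setIntegral_gaussianReal_eq_setIntegral_mul hv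
      measurableSet_Iio, ← integral_indicator measurableSet_Iio]
    rfl
  simp_rw [hinner, integral_gaussianReal_eq_integral_smul hv, smul_eq_mul]
  rw [← integral_const_mul, ← integral_neg]
  congr 1 with x
  ring

lemma integral_crossfitEstimate_mul_crossfitEstimate_gaussianReal {Ω : Type*}
    [MeasurableSpace Ω] {μ : Measure Ω} [IsProbabilityMeasure μ] {A B : Ω → ℝ × ℝ}
    (hA : HasLaw A ((gaussianReal 0 v).prod (gaussianReal 0 v)) μ)
    (hB : HasLaw B ((gaussianReal 0 v).prod (gaussianReal 0 v)) μ) (hAB : IndepFun A B μ) :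
    ∫ ω, crossfitEstimate (A ω) (B ω) * crossfitEstimate (B ω) (A ω) ∂μ = v / π := by
  have hW := measurableSet_firstArmWins
  have hfst : ∫ p, p.1 ∂(gaussianReal 0 v).prod (gaussianReal 0 v) = 0 := by
    rw [integral_fun_fst (fun x ↦ x), integral_id_gaussianReal, smul_zero]
  have hsnd : ∫ p, p.2 ∂(gaussianReal 0 v).prod (gaussianReal 0 v) = 0 := by
    rw [integral_fun_snd (fun x ↦ x), integral_id_gaussianReal, smul_zero]
  have hfst_compl := integral_add_compl hW (integrable_fst_gaussianReal_prod (v := v))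
  have hsnd_compl := integral_add_compl hW (integrable_snd_gaussianReal_prod (v := v))
  rw [hfst, setIntegral_firstArmWins_fst_gaussianReal_prod hv] at hfst_compl
  rw [hsnd, setIntegral_firstArmWins_snd_gaussianReal_prod hv] at hsnd_compl
  rw [integral_crossfitEstimate_mul_crossfitEstimate integrable_fst_gaussianReal_prod
    integrable_snd_gaussianReal_prod hA hB hAB, setIntegral_firstArmWins_fst_gaussianReal_prod hv,
    setIntegral_firstArmWins_snd_gaussianReal_prod hv, eq_neg_of_add_eq_zero_right hfst_compl,
    eq_neg_of_add_eq_zero_right hsnd_compl, integral_gaussianPDFReal_zero_sq hv]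
  have hv' : (0 : ℝ) < v := by positivity
  have hsq := sq_sqrt (mul_pos hv' pi_pos).le
  field_simp
  rw [hsq]
  ring

end GaussianFolds

/-- Cross-fitting correlation at the kink: with four independent `N(0, 1/m)` fold-arm
means `M ℓ j`, the two sample-splitting estimators have covariance `1/(π m)` and
correlation `1/π`. -/
theorem crossfit_covariance_at_kink {Ω : Type*} [MeasurableSpace Ω]
    (μ : Measure Ω) [IsProbabilityMeasure μ]
    (m : ℝ) (hm : 0 < m)
    (M : Fin 2 → Fin 2 → Ω → ℝ)
    (hmeas : ∀ l j, Measurable (M l j))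
    (hdist : ∀ l j, μ.map (M l j) = gaussianReal 0 (Real.toNNReal (1 / m)))
    (hindep : iIndepFun
      (fun p : Fin 2 × Fin 2 => M p.1 p.2) μ)
    (θ1 θ2 : Ω → ℝ)
    (hθ1 : ∀ ω, θ1 ω = if M 0 1 ω < M 0 0 ω then M 1 0 ω else M 1 1 ω)
    (hθ2 : ∀ ω, θ2 ω = if M 1 1 ω < M 1 0 ω then M 0 0 ω else M 0 1 ω) :
    (∫ ω, θ1 ω * θ2 ω ∂μ) - (∫ ω, θ1 ω ∂μ) * (∫ ω, θ2 ω ∂μ) = 1 / (π * m) ∧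
    ((∫ ω, θ1 ω * θ2 ω ∂μ) - (∫ ω, θ1 ω ∂μ) * (∫ ω, θ2 ω ∂μ)) /
        (Real.sqrt (variance θ1 μ) * Real.sqrt (variance θ2 μ)) = 1 / π := by
  set v := Real.toNNReal (1 / m)
  have hv : (v : ℝ) = 1 / m := Real.coe_toNNReal _ (by positivity)
  have hv0 : v ≠ 0 := by simpa [v] using hm
  have hM (l j : Fin 2) : HasLaw (M l j) (gaussianReal 0 v) μ :=
    ⟨(hmeas l j).aemeasurable, hdist l j⟩
  set A := fun ω ↦ (M 0 0 ω, M 0 1 ω)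
  set B := fun ω ↦ (M 1 0 ω, M 1 1 ω)
  have hA : HasLaw A ((gaussianReal 0 v).prod (gaussianReal 0 v)) μ :=
    (indepFun_iff_hasLaw_prodMk_prod (hM 0 0) (hM 0 1)).1
      (hindep.indepFun (i := (0, 0)) (j := (0, 1)) (by decide))
  have hB : HasLaw B ((gaussianReal 0 v).prod (gaussianReal 0 v)) μ :=
    (indepFun_iff_hasLaw_prodMk_prod (hM 1 0) (hM 1 1)).1
      (hindep.indepFun (i := (1, 0)) (j := (1, 1)) (by decide))
  have hAB : IndepFun A B μ := hindep.indepFun_prodMk_prodMk (fun p ↦ hmeas p.1 p.2)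
    (0, 0) (0, 1) (1, 0) (1, 1) (by decide) (by decide) (by decide) (by decide)
  have hAm : Measurable A := (hmeas 0 0).prodMk (hmeas 0 1)
  have hBm : Measurable B := (hmeas 1 0).prodMk (hmeas 1 1)
  have hθ1A : θ1 = fun ω ↦ crossfitEstimate (A ω) (B ω) := funext hθ1
  have hθ2B : θ2 = fun ω ↦ crossfitEstimate (B ω) (A ω) := funext hθ2
  have hlaw₁ : HasLaw θ1 (gaussianReal 0 v) μ := by
    rw [hθ1A]; exact hasLaw_crossfitEstimate hAm hBm (hM 1 0) (hM 1 1) hAB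
  have hlaw₂ : HasLaw θ2 (gaussianReal 0 v) μ := by
    rw [hθ2B]; exact hasLaw_crossfitEstimate hBm hAm (hM 0 0) (hM 0 1) hAB.symm
  have hcov : (∫ ω, θ1 ω * θ2 ω ∂μ) - (∫ ω, θ1 ω ∂μ) * (∫ ω, θ2 ω ∂μ) = 1 / (π * m) := by
    rw [hlaw₁.integral_eq, hlaw₂.integral_eq, integral_id_gaussianReal, mul_zero, sub_zero,
      hθ1A, hθ2B, integral_crossfitEstimate_mul_crossfitEstimate_gaussianReal hv0 hA hB hAB, hv]
    field_simp
  refine ⟨hcov, ?_⟩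
  rw [hcov, hlaw₁.variance_eq, hlaw₂.variance_eq, variance_id_gaussianReal, hv,
    mul_self_sqrt (by positivity)]
  field_simp
end
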